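/- Let n ≥ 3 and H = H(G_n) ⊆ ℤ^{2n}, and let a = Σ_i a_i δ_i ∈ ℤH with a_i ≥ 0 for all i ∈ {1,…,2n}. Then either a ∈ H, or a = b + k(δ_1 + δ_{2n}) for some integer k ≥ 1 and some b ∈ H with ℓ(b) = r(b). -/

import Mathlib

namespace Stmt16

variable {n : ℕ}

def Eset (n : ℕ) : Finset (Fin (2*n)) := Finset.univ.filter (fun i => i.val % 2 = 0)
def Oset (n : ℕ) : Finset (Fin (2*n)) := Finset.univ.filter (fun i => ¬ i.val % 2 = 0)

def eS (a : Fin (2*n) → ℤ) : ℤ := ∑ i ∈ Eset n, a i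
def oS (a : Fin (2*n) → ℤ) : ℤ := ∑ i ∈ Oset n, a i

theorem mem_Eset (i : Fin (2*n)) : i ∈ Eset n ↔ i.val % 2 = 0 := by
  simp [Eset]

theorem mem_Oset (i : Fin (2*n)) : i ∈ Oset n ↔ i.val % 2 = 1 := by
  simp [Oset, Nat.mod_two_ne_zero]

theorem sum_single (s : Finset (Fin (2*n))) (i : Fin (2*n)) :
    ∑ x ∈ s, Pi.single i (1:ℤ) x = if i ∈ s then 1 else 0 := by
  simp [Pi.single_apply, Finset.sum_ite_eq']

theorem sum_sub_smul (s : Finset (Fin (2*n))) (a : Fin (2*n) → ℤ) (k : ℤ) (i j : Fin (2*n)) :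
    ∑ x ∈ s, (a - k • (Pi.single i 1 + Pi.single j 1) : Fin (2*n) → ℤ) x =
      ∑ x ∈ s, a x - k * (if i ∈ s then 1 else 0) - k * (if j ∈ s then 1 else 0) := by
  have : ∀ x, (a - k • (Pi.single i 1 + Pi.single j 1) : Fin (2*n) → ℤ) x
      = a x - k * (Pi.single i 1 : Fin (2*n) → ℤ) x - k * (Pi.single j 1 : Fin (2*n) → ℤ) x := by
    intro x; simp [mul_add]; ring
  rw [Finset.sum_congr rfl (fun x _ => this x)]
  rw [Finset.sum_sub_distrib, Finset.sum_sub_distrib, ← Finset.mul_sum, ← Finset.mul_sum,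
    sum_single, sum_single]

theorem sum_eS_oS (a : Fin (2*n) → ℤ) : eS a + oS a = ∑ i, a i := by
  rw [eS, oS, Eset, Oset, Finset.sum_filter_add_sum_filter_not]

theorem sum_rest (hn : 2 < n) (a : Fin (2*n) → ℤ) :
    ∑ i ∈ Finset.univ.filter (fun i : Fin (2*n) => i.val ≠ 0 ∧ i.val ≠ 2*n-1), a i
      = eS a + oS a - a ⟨0, by omega⟩ - a ⟨2*n-1, by omega⟩ := by
  have h := Finset.sum_filter_add_sum_filter_not Finset.univ
    (fun i : Fin (2*n) => i.val ≠ 0 ∧ i.val ≠ 2*n-1) a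
  have h2 : Finset.univ.filter (fun i : Fin (2*n) => ¬(i.val ≠ 0 ∧ i.val ≠ 2*n-1))
      = {(⟨0, by omega⟩ : Fin (2*n)), ⟨2*n-1, by omega⟩} := by
    ext i
    simp only [Finset.mem_filter, Finset.mem_univ, true_and, Finset.mem_insert,
      Finset.mem_singleton, Fin.ext_iff]
    omega
  have hne : (⟨0, by omega⟩ : Fin (2*n)) ≠ ⟨2*n-1, by omega⟩ := by
    simp [Fin.ext_iff]; omega
  rw [h2, Finset.sum_pair hne] at h
  rw [sum_eS_oS]
  omega

theorem balanced (hn : 3 ≤ n) (H : AddSubmonoid (Fin (2*n) → ℤ))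
    (hH : H = AddSubmonoid.closure
      {x | ∃ i j : Fin (2*n), (i.val + j.val) % 2 = 1 ∧
        ¬(i.val = 0 ∧ j.val = 2*n-1) ∧ ¬(j.val = 0 ∧ i.val = 2*n-1) ∧
        x = Pi.single i 1 + Pi.single j 1})
    (a : Fin (2*n) → ℤ)
    (haZ : a ∈ AddSubgroup.closure (H : Set (Fin (2*n) → ℤ))) : eS a = oS a := by
  let φ : (Fin (2*n) → ℤ) →+ ℤ :=
    { toFun := fun a => eS a - oS a
      map_zero' := by simp [eS, oS]
      map_add' := by
        intro x y
        simp only [eS, oS, Pi.add_apply, Finset.sum_add_distrib]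
        ring }
  have hgen : ∀ x ∈ H, φ x = 0 := by
    intro x hx
    rw [hH] at hx
    induction hx using AddSubmonoid.closure_induction with
    | mem x hx =>
      obtain ⟨i, j, hpar, -, -, rfl⟩ := hx
      have heS : eS (Pi.single i 1 + Pi.single j 1)
          = (if i ∈ Eset n then 1 else 0) + (if j ∈ Eset n then 1 else 0) := by
        simp only [eS, Pi.add_apply, Finset.sum_add_distrib, sum_single]
      have hoS : oS (Pi.single i 1 + Pi.single j 1)
          = (if i ∈ Oset n then 1 else 0) + (if j ∈ Oset n then 1 else 0) := by
        simp only [oS, Pi.add_apply, Finset.sum_add_distrib, sum_single]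
      show eS _ - oS _ = 0
      rw [heS, hoS]
      simp only [mem_Eset, mem_Oset]
      rcases Nat.mod_two_eq_zero_or_one i.val with hi | hi <;>
        rcases Nat.mod_two_eq_zero_or_one j.val with hj | hj <;>
        simp [hi, hj] <;> omega
    | zero => exact φ.map_zero
    | add x y _ _ hx hy => rw [φ.map_add, hx, hy, add_zero]
  have hker : AddSubgroup.closure (H : Set (Fin (2*n) → ℤ)) ≤ φ.ker := by
    rw [AddSubgroup.closure_le]
    intro x hx
    exact hgen x hx
  have := hker haZ
  rw [AddMonoidHom.mem_ker] at this
  have : eS a - oS a = 0 := this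
  omega

theorem apply_sub (a : Fin (2*n) → ℤ) (k : ℤ) (i j x : Fin (2*n)) :
    (a - k • (Pi.single i 1 + Pi.single j 1) : Fin (2*n) → ℤ) x
      = a x - k * (if x = i then 1 else 0) - k * (if x = j then 1 else 0) := by
  simp [Pi.single_apply, mul_add]
  ring

theorem gen_mem (hn : 3 ≤ n) (H : AddSubmonoid (Fin (2*n) → ℤ))
    (hH : H = AddSubmonoid.closure
      {x | ∃ i j : Fin (2*n), (i.val + j.val) % 2 = 1 ∧
        ¬(i.val = 0 ∧ j.val = 2*n-1) ∧ ¬(j.val = 0 ∧ i.val = 2*n-1) ∧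
        x = Pi.single i 1 + Pi.single j 1})
    (i j : Fin (2*n)) (hi : i.val % 2 = 0) (hj : j.val % 2 = 1)
    (hne : ¬(i.val = 0 ∧ j.val = 2*n-1)) :
    (Pi.single i 1 + Pi.single j 1 : Fin (2*n) → ℤ) ∈ H := by
  rw [hH]
  exact AddSubmonoid.subset_closure ⟨i, j, by omega, hne, by omega, rfl⟩

set_option maxHeartbeats 1000000 in
theorem key (hn : 2 < n) (H : AddSubmonoid (Fin (2*n) → ℤ))
    (hH : H = AddSubmonoid.closure
      {x | ∃ i j : Fin (2*n), (i.val + j.val) % 2 = 1 ∧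
        ¬(i.val = 0 ∧ j.val = 2*n-1) ∧ ¬(j.val = 0 ∧ i.val = 2*n-1) ∧
        x = Pi.single i 1 + Pi.single j 1}) :
    ∀ (m : ℕ) (a : Fin (2*n) → ℤ), (∀ i, 0 ≤ a i) → eS a = (m:ℤ) → oS a = (m:ℤ) →
      a ⟨0, by omega⟩ + a ⟨2*n-1, by omega⟩ ≤ (m:ℤ) → a ∈ H := by
  intro m
  induction m with
  | zero =>
    intro a hpos he ho _
    have ha : a = 0 := by
      funext x
      rcases Nat.mod_two_eq_zero_or_one x.val with hx | hx
      · have := (Finset.sum_eq_zero_iff_of_nonneg (fun i _ => hpos i)).mp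
          (by simpa [eS] using he) x ((mem_Eset x).mpr hx)
        simpa using this
      · have := (Finset.sum_eq_zero_iff_of_nonneg (fun i _ => hpos i)).mp
          (by simpa [oS] using ho) x ((mem_Oset x).mpr hx)
        simpa using this
    rw [ha]; exact H.zero_mem
  | succ m ih =>
    intro a hpos he ho hl
    push_cast at he ho hl
    set i0 : Fin (2*n) := ⟨0, by omega⟩ with hi0
    set i1 : Fin (2*n) := ⟨2*n-1, by omega⟩ with hi1
    have hi0E : i0 ∈ Eset n := (mem_Eset i0).mpr (by simp [hi0])
    have hi1O : i1 ∈ Oset n := (mem_Oset i1).mpr (by simp [hi1]; omega)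
    have hi0v : i0.val = 0 := rfl
    have hi1v : i1.val = 2*n-1 := rfl
    have hi01 : i0 ≠ i1 := by simp [Fin.ext_iff, hi0, hi1]; omega
    -- the generic step
    have step : ∀ i j : Fin (2*n), i.val % 2 = 0 → j.val % 2 = 1 →
        ¬(i.val = 0 ∧ j.val = 2*n-1) → 0 < a i → 0 < a j →
        (a - (1:ℤ) • (Pi.single i 1 + Pi.single j 1) : Fin (2*n) → ℤ) i0 +
          (a - (1:ℤ) • (Pi.single i 1 + Pi.single j 1) : Fin (2*n) → ℤ) i1 ≤ (m:ℤ) →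
        a ∈ H := by
      intro i j hi hj hne hai haj hcond
      have hij : i ≠ j := by
        intro h; rw [h] at hi; omega
      have hiE : i ∈ Eset n := (mem_Eset i).mpr hi
      have hjE : j ∉ Eset n := by simp [mem_Eset, hj]
      have hiO : i ∉ Oset n := by simp [mem_Oset, hi]
      have hjO : j ∈ Oset n := (mem_Oset j).mpr hj
      have ha'pos : ∀ x, 0 ≤ (a - (1:ℤ) • (Pi.single i 1 + Pi.single j 1) : Fin (2*n) → ℤ) x := by
        intro x
        rw [apply_sub]
        have := hpos x
        by_cases hxi : x = i
        · subst hxi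
          simp [hij, hai]
          omega
        · by_cases hxj : x = j
          · subst hxj
            simp [hxi, haj]
            omega
          · simp [hxi, hxj]
            omega
      have ha'e : eS (a - (1:ℤ) • (Pi.single i 1 + Pi.single j 1) : Fin (2*n) → ℤ) = (m:ℤ) := by
        rw [eS, sum_sub_smul]
        simp only [hiE, hjE, if_pos, if_neg, if_true, if_false]
        have h' : ∑ x ∈ Eset n, a x = eS a := rfl
        rw [h', he]; ring
      have ha'o : oS (a - (1:ℤ) • (Pi.single i 1 + Pi.single j 1) : Fin (2*n) → ℤ) = (m:ℤ) := by
        rw [oS, sum_sub_smul]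
        simp only [hiO, hjO, if_pos, if_neg, if_true, if_false]
        have h' : ∑ x ∈ Oset n, a x = oS a := rfl
        rw [h', ho]; ring
      have ha'H : (a - (1:ℤ) • (Pi.single i 1 + Pi.single j 1) : Fin (2*n) → ℤ) ∈ H :=
        ih _ ha'pos ha'e ha'o hcond
      have hrec : a = (a - (1:ℤ) • (Pi.single i 1 + Pi.single j 1) : Fin (2*n) → ℤ)
          + (Pi.single i 1 + Pi.single j 1) := by
        rw [one_smul]
        abel
      rw [hrec]
      exact H.add_mem ha'H (gen_mem hn H hH i j hi hj hne)
    by_cases h0 : 0 < a i0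
    · -- find odd j ≠ i1 with a j > 0
      have hex : ∃ j : Fin (2*n), j.val % 2 = 1 ∧ j ≠ i1 ∧ 0 < a j := by
        by_contra hcon
        push_neg at hcon
        have hsum : ∑ x ∈ (Oset n).erase i1, a x = 0 := by
          apply Finset.sum_eq_zero
          intro x hx
          rcases Finset.mem_erase.mp hx with ⟨hx1, hx2⟩
          exact le_antisymm (hcon x ((mem_Oset x).mp hx2) hx1) (hpos x)
        have hoa : oS a = a i1 := by
          rw [oS, ← Finset.add_sum_erase _ _ hi1O, hsum, add_zero]
        rw [hoa] at ho
        have hle : a i0 ≤ eS a := Finset.single_le_sum (fun x _ => hpos x) hi0E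
        linarith
      obtain ⟨j, hj, hjne, haj⟩ := hex
      have hjv : j.val ≠ 2*n-1 := by
        intro h
        exact hjne (Fin.ext (by rw [h, hi1v]))
      refine step i0 j (by simp [hi0v]) hj (by simp [hjv]) h0 haj ?_
      have hji0 : i0 ≠ j := by
        intro h; rw [← h] at hj; rw [hi0v] at hj; omega
      rw [apply_sub, apply_sub]
      simp [hi01, hji0.symm, Ne.symm hjne]
      omega
    · have h0' : a i0 = 0 := le_antisymm (not_lt.mp h0) (hpos i0)
      have hexE : ∃ i : Fin (2*n), i.val % 2 = 0 ∧ 0 < a i := by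
        by_contra hcon
        push_neg at hcon
        have : eS a = 0 := by
          apply Finset.sum_eq_zero
          intro x hx
          exact le_antisymm (hcon x ((mem_Eset x).mp hx)) (hpos x)
        rw [this] at he
        have : (0:ℤ) ≤ (m:ℤ) := by positivity
        omega
      obtain ⟨i, hi, hai⟩ := hexE
      have hii0 : i ≠ i0 := by
        intro h; rw [h, h0'] at hai; omega
      have hiv : i.val ≠ 0 := by
        intro h; exact hii0 (Fin.ext (by rw [h, hi0v]))
      by_cases h1 : 0 < a i1
      · refine step i i1 hi (by simp [hi1v]; omega) (by simp [hiv]) hai h1 ?_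
        have hii1 : i0 ≠ i := Ne.symm hii0
        rw [apply_sub, apply_sub]
        simp [hii1, hi01, Ne.symm hi01]
        omega
      · have h1' : a i1 = 0 := le_antisymm (not_lt.mp h1) (hpos i1)
        have hexO : ∃ j : Fin (2*n), j.val % 2 = 1 ∧ 0 < a j := by
          by_contra hcon
          push_neg at hcon
          have : oS a = 0 := by
            apply Finset.sum_eq_zero
            intro x hx
            exact le_antisymm (hcon x ((mem_Oset x).mp hx)) (hpos x)
          rw [this] at ho
          have : (0:ℤ) ≤ (m:ℤ) := by positivity
          omega
        obtain ⟨j, hj, haj⟩ := hexO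
        have hji1 : j ≠ i1 := by
          intro h; rw [h, h1'] at haj; omega
        have hjv : j.val ≠ 2*n-1 := by
          intro h; exact hji1 (Fin.ext (by rw [h, hi1v]))
        refine step i j hi hj (by simp [hiv]) hai haj ?_
        have h2 : i0 ≠ i := Ne.symm hii0
        have h3 : i0 ≠ j := by
          intro h; rw [← h, hi0v] at hj; omega
        have h4 : i1 ≠ i := by
          intro h; rw [← h, hi1v] at hi; omega
        have h5 : i1 ≠ j := Ne.symm hji1
        rw [apply_sub, apply_sub]
        simp [h2, h3, h4, h5, h0', h1']

end Stmt16

/-- For `n ≥ 3` let `H = H(G_n) ⊆ ℤ^{2n}` be as in the paper (vertices `1,…,2n`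
modelled by `Fin (2*n)` via `i ↦ i + 1`, so vertex `1` is index `0` and vertex `2n` is index
`2n-1`).  If `a ∈ ℤH` has all coordinates nonnegative, then either `a ∈ H`, or
`a = b + k (δ_1 + δ_{2n})` for some `k ≥ 1` and some `b ∈ H` with `ℓ(b) = r(b)`. -/
theorem stmt_16 (n : ℕ) (hn : 3 ≤ n)
    (H : AddSubmonoid (Fin (2*n) → ℤ))
    (hH : H = AddSubmonoid.closure
      {x | ∃ i j : Fin (2*n), (i.val + j.val) % 2 = 1 ∧
        ¬(i.val = 0 ∧ j.val = 2*n-1) ∧ ¬(j.val = 0 ∧ i.val = 2*n-1) ∧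
        x = Pi.single i 1 + Pi.single j 1})
    (a : Fin (2*n) → ℤ)
    (haZ : a ∈ AddSubgroup.closure (H : Set (Fin (2*n) → ℤ)))
    (hpos : ∀ i, 0 ≤ a i) :
    a ∈ H ∨ ∃ (k : ℕ) (b : Fin (2*n) → ℤ), 1 ≤ k ∧ b ∈ H ∧
      (b ⟨0, by omega⟩ + b ⟨2*n-1, by omega⟩ =
        ∑ i ∈ Finset.univ.filter (fun i : Fin (2*n) => i.val ≠ 0 ∧ i.val ≠ 2*n-1), b i) ∧
      a = b + (k : ℤ) • (Pi.single ⟨0, by omega⟩ 1 + Pi.single ⟨2*n-1, by omega⟩ 1) := by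
  have hlt0 : 0 < 2*n := by omega
  have hlt1 : 2*n-1 < 2*n := by omega
  open Stmt16 in
  have hbal : eS a = oS a := balanced hn H hH a haZ
  open Stmt16 in
  have h0E : (⟨0, hlt0⟩ : Fin (2*n)) ∈ Eset n := (mem_Eset _).mpr rfl
  open Stmt16 in
  have h1O : (⟨2*n-1, hlt1⟩ : Fin (2*n)) ∈ Oset n := (mem_Oset _).mpr (show (2*n-1) % 2 = 1 by omega)
  open Stmt16 in
  have h1E : (⟨2*n-1, hlt1⟩ : Fin (2*n)) ∉ Eset n := by
    simp only [mem_Eset]; show ¬ (2*n-1) % 2 = 0; omega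
  open Stmt16 in
  have h0O : (⟨0, hlt0⟩ : Fin (2*n)) ∉ Oset n := by
    simp only [mem_Oset]; show ¬ (0:ℕ) % 2 = 1; omega
  have h01 : (⟨0, hlt0⟩ : Fin (2*n)) ≠ ⟨2*n-1, hlt1⟩ := by
    simp only [ne_eq, Fin.ext_iff]; omega
  open Stmt16 in
  have ha0 : a ⟨0, hlt0⟩ ≤ eS a := Finset.single_le_sum (fun x _ => hpos x) h0E
  open Stmt16 in
  have ha1 : a ⟨2*n-1, hlt1⟩ ≤ oS a := Finset.single_le_sum (fun x _ => hpos x) h1O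
  open Stmt16 in
  have hsnn : 0 ≤ eS a := Finset.sum_nonneg (fun x _ => hpos x)
  open Stmt16 in
  by_cases hle : a ⟨0, hlt0⟩ + a ⟨2*n-1, hlt1⟩ ≤ eS a
  · left
    open Stmt16 in
    refine key hn H hH (eS a).toNat a hpos ?_ ?_ ?_
    · rw [Int.toNat_of_nonneg hsnn]
    · rw [Int.toNat_of_nonneg hsnn]; exact hbal.symm
    · rw [Int.toNat_of_nonneg hsnn]; exact hle
  · right
    push_neg at hle
    open Stmt16 in
    obtain ⟨k, hk⟩ : ∃ k : ℕ, (k:ℤ) = a ⟨0, hlt0⟩ + a ⟨2*n-1, hlt1⟩ - eS a :=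
      ⟨(a ⟨0, hlt0⟩ + a ⟨2*n-1, hlt1⟩ - eS a).toNat, Int.toNat_of_nonneg (by linarith)⟩
    open Stmt16 in
    obtain ⟨m, hm⟩ : ∃ m : ℕ, (m:ℤ) = eS a - k :=
      ⟨(eS a - (k:ℤ)).toNat, Int.toNat_of_nonneg (by rw [hk]; linarith)⟩
    open Stmt16 in
    refine ⟨k, a - (k:ℤ) • (Pi.single ⟨0, hlt0⟩ 1 + Pi.single ⟨2*n-1, hlt1⟩ 1),
      ?_, ?_, ?_, ?_⟩
    · have : (1:ℤ) ≤ (k:ℤ) := by rw [hk]; linarith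
      exact_mod_cast this
    · -- membership in H via key
      open Stmt16 in
      have hb0 : (a - (k:ℤ) • (Pi.single ⟨0, hlt0⟩ 1 + Pi.single ⟨2*n-1, hlt1⟩ 1)
          : Fin (2*n) → ℤ) ⟨0, hlt0⟩ = a ⟨0, hlt0⟩ - k := by
        rw [apply_sub]; simp [h01]
      open Stmt16 in
      have hb1 : (a - (k:ℤ) • (Pi.single ⟨0, hlt0⟩ 1 + Pi.single ⟨2*n-1, hlt1⟩ 1)
          : Fin (2*n) → ℤ) ⟨2*n-1, hlt1⟩ = a ⟨2*n-1, hlt1⟩ - k := by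
        rw [apply_sub]; simp [Ne.symm h01]
      open Stmt16 in
      refine key hn H hH m _ ?_ ?_ ?_ ?_
      · intro x
        rw [apply_sub]
        have := hpos x
        by_cases hx0 : x = ⟨0, hlt0⟩
        · subst hx0
          simp only [if_neg h01, mul_zero, sub_zero]
          simp only [if_true, mul_one]
          have := ha1
          rw [← hbal] at this
          omega
        · by_cases hx1 : x = ⟨2*n-1, hlt1⟩
          · subst hx1
            simp only [if_neg (Ne.symm h01), mul_zero, sub_zero]
            simp only [if_true, mul_one]
            have := ha0
            rw [hbal] at ha0
            omega
          · simp only [if_neg hx0, if_neg hx1, mul_zero, sub_zero]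
            omega
      · rw [eS, sum_sub_smul]
        simp only [h0E, h1E, if_pos, if_neg, if_true, if_false]
        have h' : ∑ x ∈ Eset n, a x = eS a := rfl
        rw [h']; rw [hm]; ring
      · rw [oS, sum_sub_smul]
        simp only [h0O, h1O, if_pos, if_neg, if_true, if_false]
        have h' : ∑ x ∈ Oset n, a x = oS a := rfl
        rw [h', ← hbal]; rw [hm]; ring
      · rw [hb0, hb1, hm, hk]
        rw [← hbal] at ha1
        linarith
    · -- ℓ(b) = r(b)
      open Stmt16 in
      rw [sum_rest hn]
      open Stmt16 in
      have hb0 : (a - (k:ℤ) • (Pi.single ⟨0, hlt0⟩ 1 + Pi.single ⟨2*n-1, hlt1⟩ 1)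
          : Fin (2*n) → ℤ) ⟨0, hlt0⟩ = a ⟨0, hlt0⟩ - k := by
        rw [apply_sub]; simp [h01]
      open Stmt16 in
      have hb1 : (a - (k:ℤ) • (Pi.single ⟨0, hlt0⟩ 1 + Pi.single ⟨2*n-1, hlt1⟩ 1)
          : Fin (2*n) → ℤ) ⟨2*n-1, hlt1⟩ = a ⟨2*n-1, hlt1⟩ - k := by
        rw [apply_sub]; simp [Ne.symm h01]
      open Stmt16 in
      have heb : eS (a - (k:ℤ) • (Pi.single ⟨0, hlt0⟩ 1 + Pi.single ⟨2*n-1, hlt1⟩ 1)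
          : Fin (2*n) → ℤ) = eS a - k := by
        rw [eS, sum_sub_smul]
        simp only [h0E, h1E, if_pos, if_neg, if_true, if_false]
        have h' : ∑ x ∈ Eset n, a x = eS a := rfl
        rw [h']; ring
      open Stmt16 in
      have hob : oS (a - (k:ℤ) • (Pi.single ⟨0, hlt0⟩ 1 + Pi.single ⟨2*n-1, hlt1⟩ 1)
          : Fin (2*n) → ℤ) = oS a - k := by
        rw [oS, sum_sub_smul]
        simp only [h0O, h1O, if_pos, if_neg, if_true, if_false]
        have h' : ∑ x ∈ Oset n, a x = oS a := rfl
        rw [h']; ring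
      rw [hb0, hb1, heb, hob, ← hbal, hk]
      ring
    · abel
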